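/- For every matroid M on a finite ground set E(M) and every X ⊆ E(M), γ_M(X) = β_{M*}(E(M) ∖ X), where M* is the dual matroid of M. -/

import Mathlib

open Set Matroid
open scoped Classical

namespace Paper

variable {α : Type*}

/-- A circuit of a matroid: a minimal dependent set. -/
def Circuit (M : Matroid α) (C : Set α) : Prop :=
  M.Dep C ∧ ∀ D ⊂ C, M.Indep D

/-- A coloop: an element of the ground set lying in no circuit. -/
def Coloop (M : Matroid α) (x : α) : Prop :=
  x ∈ M.E ∧ ∀ C, Circuit M C → x ∉ C

/-- The set of coloops of a matroid. -/
def coloops (M : Matroid α) : Set α := {x | Coloop M x}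

/-- A cyclic set: a subset of the ground set each of whose elements lies in a
circuit contained in the set (equivalently, the restriction has no coloops). -/
def Cyclic (M : Matroid α) (X : Set α) : Prop :=
  X ⊆ M.E ∧ ∀ x ∈ X, ∃ C, Circuit M C ∧ C ⊆ X ∧ x ∈ C

/-- A cyclic flat: a cyclic set that is also a flat. -/
def CyclicFlat (M : Matroid α) (X : Set α) : Prop :=
  Cyclic M X ∧ M.IsFlat X

/-- The rank of a set: the largest cardinality of an independent subset. -/
noncomputable def rk (M : Matroid α) (X : Set α) : ℕ :=
  sSup (Set.ncard '' {I | M.Indep I ∧ I ⊆ X})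

/-- The nullity of a set: `n(X) = |X| − r(X)`. -/
noncomputable def nullity (M : Matroid α) (X : Set α) : ℤ :=
  (X.ncard : ℤ) - rk M X

/-- Deletion of a single element: `M \ e`. -/
noncomputable def deleteElem (M : Matroid α) (e : α) : Matroid α :=
  M ↾ (M.E \ {e})

variable [Fintype α] [DecidableEq α]

/-- The `γ` function: `γ_M(X) = n(X) − Σ_{Z ∈ Z(M), Z ⊊ X} γ_M(Z)`. -/
noncomputable def gamma (M : Matroid α) (X : Finset α) : ℤ :=
  nullity M ↑X -
    ∑ Z ∈ (Finset.univ.filter (fun Z : Finset α => CyclicFlat M ↑Z ∧ Z ⊂ X)).attach,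
      gamma M Z.1
termination_by X.card
decreasing_by
  exact Finset.card_lt_card (Finset.mem_filter.mp Z.2).2.2

/-- The `β` function: `β_N(X) = r(E(N)) − r(X) − Σ_{Z ∈ Z(N), X ⊊ Z} β_N(Z)`. -/
noncomputable def beta (M : Matroid α) (X : Finset α) : ℤ :=
  (rk M M.E : ℤ) - rk M ↑X -
    ∑ Z ∈ (Finset.univ.filter (fun Z : Finset α => CyclicFlat M ↑Z ∧ X ⊂ Z)).attach,
      beta M Z.1
termination_by Fintype.card α - X.card
decreasing_by
  have h1 : X.card < Z.1.card := Finset.card_lt_card (Finset.mem_filter.mp Z.2).2.2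
  have h2 : Z.1.card ≤ Fintype.card α := Finset.card_le_univ _
  omega

end Paper

/-!
A set `X ⊆ E` is cyclic in `M` exactly when `E ∖ X` is a flat of `M✶`: the coloops of `M | X`
are the loops of `(M | X)✶ = M✶ ／ (E ∖ X)`, i.e. the points of `cl✶(E ∖ X) ∖ (E ∖ X)`.
Applied to `M` and `M✶`, complementation is a bijection `Z(M) → Z(M✶)` reversing inclusion.
Together with `n_M(X) = r✶(E) − r✶(E ∖ X)`, this matches the recursion for `γ_M` at `X` term by
term with the recursion for `β_{M✶}` at `E ∖ X`, and the identity follows by induction on `X`.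
-/

lemma sdiff_lt_sdiff_iff_lt {β : Type*} [GeneralizedBooleanAlgebra β] {x y z : β}
    (hx : x ≤ z) (hy : y ≤ z) : z \ x < z \ y ↔ y < x := by
  simp only [lt_iff_le_not_ge, sdiff_le_sdiff_iff_le hx hy, sdiff_le_sdiff_iff_le hy hx]

namespace Paper

variable {α : Type*} {M : Matroid α} {C I X : Set α}

lemma circuit_iff_isCircuit : Circuit M C ↔ M.IsCircuit C := by
  rw [isCircuit_iff_forall_ssubset]
  rfl

lemma restrict_coloops_eq (hX : X ⊆ M.E) :
    (M ↾ X).coloops = M✶.closure (M.E \ X) \ (M.E \ X) := by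
  rw [← dual_loops, ← delete_compl hX, dual_delete, contract_loops_eq]

lemma cyclic_iff_disjoint_restrict_coloops (hX : X ⊆ M.E) :
    Cyclic M X ↔ Disjoint X (M ↾ X).coloops := by
  simp only [Cyclic, hX, true_and, Set.disjoint_left, ← isColoop_iff_mem_coloops]
  refine forall₂_congr fun x hx ↦ ?_
  rw [isColoop_iff_forall_notMem_isCircuit (by simpa)]
  simp [circuit_iff_isCircuit, restrict_isCircuit_iff hX]

lemma cyclic_iff_isFlat_dual_compl (hX : X ⊆ M.E) :
    Cyclic M X ↔ M✶.IsFlat (M.E \ X) := by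
  rw [cyclic_iff_disjoint_restrict_coloops hX, restrict_coloops_eq hX, isFlat_iff_closure_eq]
  refine ⟨fun h ↦ (M✶.subset_closure (M.E \ X) sdiff_subset).antisymm' fun y hy ↦ ?_,
    fun h ↦ by simp [h]⟩
  exact ⟨M✶.closure_subset_ground _ hy,
    fun hyX ↦ h.notMem_of_mem_left hyX ⟨hy, fun h' ↦ h'.2 hyX⟩⟩

lemma cyclicFlat_iff_dual_compl (hX : X ⊆ M.E) :
    CyclicFlat M X ↔ CyclicFlat M✶ (M.E \ X) := by
  have hflat := cyclic_iff_isFlat_dual_compl (M := M✶) (X := M.E \ X) sdiff_subset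
  rw [dual_dual, dual_ground, sdiff_sdiff_cancel_left hX] at hflat
  rw [CyclicFlat, CyclicFlat, cyclic_iff_isFlat_dual_compl hX, hflat, and_comm]

lemma rk_eq_ncard_of_isBasis' (hI : M.IsBasis' I X) (hfin : I.Finite) : rk M X = I.ncard := by
  have hmax : ∀ n ∈ ncard '' {J | M.Indep J ∧ J ⊆ X}, n ≤ I.ncard := by
    rintro _ ⟨J, ⟨hJ, hJX⟩, rfl⟩
    exact ENat.toNat_le_toNat ((hJ.encard_le_eRk_of_subset hJX).trans hI.encard_eq_eRk.ge)
      hfin.encard_lt_top.ne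
  exact le_antisymm (csSup_le ⟨_, I, ⟨hI.indep, hI.subset⟩, rfl⟩ hmax)
    (le_csSup ⟨_, hmax⟩ ⟨I, ⟨hI.indep, hI.subset⟩, rfl⟩)

lemma cast_rk_eq_eRk [M.RankFinite] (X : Set α) : (rk M X : ℕ∞) = M.eRk X := by
  obtain ⟨I, hI⟩ := M.exists_isBasis' X
  have hfin := hI.indep.finite
  rw [rk_eq_ncard_of_isBasis' hI hfin, hfin.cast_ncard_eq, hI.encard_eq_eRk]

lemma nullity_eq_rk_dual_sub [M.Finite] (hX : X ⊆ M.E) :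
    nullity M X = rk M✶ M✶.E - rk M✶ (M.E \ X) := by
  have hfin : ∀ Y ⊆ M.E, (Y.ncard : ℕ∞) = Y.encard :=
    fun Y hY ↦ (M.ground_finite.subset hY).cast_ncard_eq
  have hdual := M.eRk_dual_add_eRank (M.E \ X)
  have hrank := M.eRank_add_eRank_dual
  have hcard := encard_sdiff_add_encard_of_subset hX
  rw [sdiff_sdiff_cancel_left hX] at hdual
  rw [← eRk_ground, ← eRk_ground, ← cast_rk_eq_eRk, ← cast_rk_eq_eRk, ← hfin _ subset_rfl]
    at hrank
  rw [← eRk_ground, ← cast_rk_eq_eRk, ← cast_rk_eq_eRk, ← cast_rk_eq_eRk,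
    ← hfin _ sdiff_subset] at hdual
  rw [← hfin _ sdiff_subset, ← hfin _ hX, ← hfin _ subset_rfl] at hcard
  norm_cast at hdual hrank hcard
  rw [nullity]
  omega

lemma subset_of_cyclicFlat {E Z : Finset α} (hE : ↑E = M.E) (hZ : CyclicFlat M ↑Z) : Z ⊆ E := by
  rw [← Finset.coe_subset, hE]
  exact hZ.1.1

lemma cyclicFlat_and_ssubset_iff_dual [DecidableEq α] {E X Z : Finset α} (hE : ↑E = M.E)
    (hX : X ⊆ E) (hZ : Z ⊆ E) :
    CyclicFlat M ↑Z ∧ Z ⊂ X ↔ CyclicFlat M✶ ↑(E \ Z) ∧ E \ X ⊂ E \ Z := by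
  rw [sdiff_lt_sdiff_iff_lt hX hZ, Finset.coe_sdiff, hE,
    cyclicFlat_iff_dual_compl (by rw [← hE]; exact_mod_cast hZ)]

variable [Fintype α] [DecidableEq α]

theorem statement_19 (M : Matroid α) (E : Finset α) (hE : ↑E = M.E)
    (X : Finset α) (hX : X ⊆ E) :
    gamma M X = beta M✶ (E \ X) := by
  induction X using Finset.strongInduction with
  | H X ih =>
  have hXE : (↑X : Set α) ⊆ M.E := hE ▸ Finset.coe_subset.mpr hX
  rw [gamma, beta, nullity_eq_rk_dual_sub hXE, ← hE, ← Finset.coe_sdiff, Finset.sum_attach,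
    Finset.sum_attach]
  congr 1
  refine Finset.sum_nbij' (E \ ·) (E \ ·) (fun Z hZ ↦ ?_) (fun W hW ↦ ?_) (fun Z hZ ↦ ?_)
    (fun W hW ↦ ?_) (fun Z hZ ↦ ?_) <;>
    simp only [Finset.mem_filter_univ] at *
  · exact (cyclicFlat_and_ssubset_iff_dual hE hX (subset_of_cyclicFlat hE hZ.1)).1 hZ
  · have hWE := subset_of_cyclicFlat (M := M✶) hE hW.1
    rw [← Finset.sdiff_sdiff_eq_self hWE] at hW
    exact (cyclicFlat_and_ssubset_iff_dual hE hX Finset.sdiff_subset).2 hW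
  · exact Finset.sdiff_sdiff_eq_self (subset_of_cyclicFlat hE hZ.1)
  · exact Finset.sdiff_sdiff_eq_self (subset_of_cyclicFlat (M := M✶) hE hW.1)
  · exact ih Z hZ.2 (subset_of_cyclicFlat hE hZ.1)

end Paper
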